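/- arXiv:1910.02627 — 3 statements merged into one kernel-verified Lean document; each statement's English description precedes it below -/
import Mathlib

section
/- Let f and g be real polynomials with only real roots and positive leading coefficients, and let p, q be natural numbers. Then f (p,q)-interlaces g (i.e., r_{i+p}(g) ≤ r_i(f) ≤ r_{i-q}(g) for all integers i, with the conventions r_i = +∞ for i < 1 and r_i = -∞ for i > deg) if and only if for every real number r, the difference n(f,r) - n(g,r) satisfies -p ≤ n(f,r) - n(g,r) ≤ q, where n(h,r) denotes the number of roots of h (with multiplicity) in the interval [r,+∞). -/
open Polynomial in
/-- The `i`-th element (1-indexed) of a list, as an `EReal`, with the convention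
that it is `+∞` for `i < 1` and `-∞` past the end of the list. -/
noncomputable def seqOf (L : List ℝ) (i : ℤ) : EReal :=
  if i < 1 then ⊤ else (L[(i - 1).toNat]?).elim ⊥ (fun x => (x : EReal))

open Polynomial in
/-- `rSeq f i` is the `i`-th root of `f`, roots listed in non-increasing order,
with `r_i = +∞` for `i < 1` and `r_i = -∞` for `i` beyond the number of roots. -/
noncomputable def rSeq (f : Polynomial ℝ) (i : ℤ) : EReal :=
  seqOf (f.roots.sort (· ≥ ·)) i

open Polynomial in
/-- `f` `(p,q)`-interlaces `g` : `r_{i+p}(g) ≤ r_i(f) ≤ r_{i-q}(g)` for all `i`. -/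
def PQInt (p q : ℕ) (f g : Polynomial ℝ) : Prop :=
  ∀ i : ℤ, rSeq g (i + p) ≤ rSeq f i ∧ rSeq f i ≤ rSeq g (i - q)

open Polynomial in
/-- `f` is real-rooted with positive leading coefficient. -/
def RR (f : Polynomial ℝ) : Prop :=
  0 < f.leadingCoeff ∧ f.roots.card = f.natDegree

open Polynomial in
/-- number of roots of `f` (with multiplicity) in `[r, ∞)`. -/
noncomputable def nRoots (f : Polynomial ℝ) (r : ℝ) : ℕ :=
  (f.roots.filter (fun x => r ≤ x)).card

/-- `i`-th largest eigenvalue of a Hermitian matrix, as an `EReal`,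
with conventions `λ_i = +∞` for `i < 1` and `λ_i = -∞` for `i > n`. -/
noncomputable def eigSeq {m : Type*} [Fintype m] [DecidableEq m]
    {M : Matrix m m ℂ} (hM : M.IsHermitian) (i : ℤ) : EReal :=
  seqOf ((Finset.univ.val.map hM.eigenvalues).sort (· ≥ ·)) i

/-- positive index of inertia: number of positive eigenvalues. -/
noncomputable def posIdx {m : Type*} [Fintype m] [DecidableEq m]
    {M : Matrix m m ℂ} (hM : M.IsHermitian) : ℕ :=
  (Finset.univ.filter (fun i => 0 < hM.eigenvalues i)).card

/-- negative index of inertia: number of negative eigenvalues. -/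
noncomputable def negIdx {m : Type*} [Fintype m] [DecidableEq m]
    {M : Matrix m m ℂ} (hM : M.IsHermitian) : ℕ :=
  (Finset.univ.filter (fun i => hM.eigenvalues i < 0)).card

/-- characteristic polynomial of `M` equals the real polynomial `f` (coerced to `ℂ`). -/
def HasCharpoly {m : Type*} [Fintype m] [DecidableEq m]
    (M : Matrix m m ℂ) (f : Polynomial ℝ) : Prop :=
  M.charpoly = f.map (algebraMap ℝ ℂ)

/-!
Write `n(h, r)` for the number of roots of `h` in `[r, ∞)`. Since the roots are listed in
non-increasing order, `r ≤ r_i(h)` holds exactly when `i ≤ n(h, r)`: the maps `i ↦ r_i(h)` and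
`r ↦ n(h, r)` determine each other like a Galois connection. Under this correspondence the
inequality `r_{i+p}(g) ≤ r_i(f)` for all `i` turns into `n(g, r) ≤ n(f, r) + p` for all `r`, and
`r_i(f) ≤ r_{i-q}(g)` for all `i` into `n(f, r) ≤ n(g, r) + q`.
-/

namespace List

theorem exists_mem_getElem?_le_iff_lt_countP {α : Type*} [LinearOrder α] {L : List α}
    (hL : L.Pairwise (· ≥ ·)) (r : α) (k : ℕ) : (∃ x ∈ L[k]?, r ≤ x) ↔ k < L.countP (r ≤ ·) := by
  induction L generalizing k with
  | nil => simp
  | cons a L ih =>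
    rw [pairwise_cons] at hL
    by_cases hra : r ≤ a
    · cases k with
      | zero => simp [hra]
      | succ k => simpa [hra] using ih hL.2 k
    · have hlt : ∀ x ∈ a :: L, x < r := by
        simp only [mem_cons, forall_eq_or_imp]
        exact ⟨not_le.1 hra, fun x hx => (hL.1 x hx).trans_lt (not_le.1 hra)⟩
      have hzero : (a :: L).countP (r ≤ ·) = 0 :=
        countP_eq_zero.2 fun x hx => by simpa using hlt x hx
      simp only [hzero, Nat.not_lt_zero, iff_false, not_exists, not_and, not_le]
      exact fun x hx => hlt x (mem_of_getElem? hx)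

end List

theorem coe_le_seqOf_iff {L : List ℝ} (hL : L.Pairwise (· ≥ ·)) (r : ℝ) (i : ℤ) :
    (r : EReal) ≤ seqOf L i ↔ i ≤ L.countP (r ≤ ·) := by
  rw [seqOf]
  split_ifs with hi
  · simp only [le_top, true_iff]
    omega
  · have hcoe : (r : EReal) ≤ (L[(i - 1).toNat]?).elim ⊥ (fun x => (x : EReal)) ↔
        ∃ x ∈ L[(i - 1).toNat]?, r ≤ x := by
      cases L[(i - 1).toNat]? <;> simp
    rw [hcoe, List.exists_mem_getElem?_le_iff_lt_countP hL]
    omega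

theorem coe_le_rSeq_iff (f : Polynomial ℝ) (r : ℝ) (i : ℤ) :
    (r : EReal) ≤ rSeq f i ↔ i ≤ nRoots f r := by
  have hcount : nRoots f r = (f.roots.sort (· ≥ ·)).countP (r ≤ ·) := by
    rw [nRoots, ← Multiset.countP_eq_card_filter, ← Multiset.coe_countP, Multiset.sort_eq]
  rw [rSeq, coe_le_seqOf_iff (f.roots.pairwise_sort _), hcount]

theorem forall_add_le_iff_forall_le_add {a b : ℤ → EReal} {A B : ℝ → ℤ}
    (ha : ∀ (r : ℝ) i, (r : EReal) ≤ a i ↔ i ≤ A r)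
    (hb : ∀ (r : ℝ) i, (r : EReal) ≤ b i ↔ i ≤ B r) (p : ℤ) :
    (∀ i, b (i + p) ≤ a i) ↔ ∀ r, B r ≤ A r + p := by
  constructor
  · intro h r
    have hr : (r : EReal) ≤ b (B r - p + p) := (hb r _).2 (by omega)
    have := (ha r _).1 (hr.trans (h _))
    omega
  · intro h i
    by_contra! hlt
    obtain ⟨c, hac, hcb⟩ := EReal.lt_iff_exists_real_btwn.1 hlt
    have hi := (hb c _).1 hcb.le
    exact hac.not_ge ((ha c i).2 (by linarith [h c]))

theorem stmt0_general (f g : Polynomial ℝ) (p q : ℕ) :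
    PQInt p q f g ↔
      ∀ r : ℝ, -(p : ℤ) ≤ (nRoots f r : ℤ) - (nRoots g r : ℤ) ∧
        (nRoots f r : ℤ) - (nRoots g r : ℤ) ≤ q := by
  have lower := forall_add_le_iff_forall_le_add (coe_le_rSeq_iff f) (coe_le_rSeq_iff g) p
  have upper := forall_add_le_iff_forall_le_add (coe_le_rSeq_iff g) (coe_le_rSeq_iff f) q
  have reindex : (∀ i, rSeq f i ≤ rSeq g (i - q)) ↔ ∀ i, rSeq f (i + q) ≤ rSeq g i :=
    (Equiv.subRight (q : ℤ)).forall_congr fun i => by simp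
  rw [PQInt, forall_and, reindex, lower, upper, ← forall_and]
  exact forall_congr' fun r => by omega

theorem stmt0 (f g : Polynomial ℝ) (hf : RR f) (hg : RR g) (p q : ℕ) :
    PQInt p q f g ↔
      ∀ r : ℝ, -(p : ℤ) ≤ (nRoots f r : ℤ) - (nRoots g r : ℤ) ∧
        (nRoots f r : ℤ) - (nRoots g r : ℤ) ≤ q :=
  stmt0_general f g p q
end

section
/- Suppose f (p,q)-interlaces g, and let 0 ≤ s ≤ p and 0 ≤ t ≤ q. Set k = max{deg f - t, deg g - p + s} and m = min{deg f + s, deg g + q - t}. Then for each integer d with k ≤ d ≤ m, there exists a monic real-rooted polynomial h of degree d such that f (s,t)-interlaces h and h (p-s, q-t)-interlaces g. -/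
/-! Build `h` greedily: its `j`-th root is the larger of the two lower bounds `r_{j+t}(f)` and
`r_{j+p-s}(g)` that the two required interlacings impose, raised to a common lower bound `B` of
all roots of `f` and `g` so that it stays finite. The interlacing of `f` and `g` puts this below
both upper bounds `r_{j-s}(f)` and `r_{j-q+t}(g)`; `d ≥ k` makes both lower bounds `-∞` past `d`,
and `d ≤ m` makes both upper bounds genuine roots, hence `≥ B`, for `1 ≤ j ≤ d`. -/

open Polynomial

lemma seqOf_of_lt_one (L : List ℝ) {i : ℤ} (h : i < 1) : seqOf L i = ⊤ := if_pos h

lemma seqOf_of_length_lt {L : List ℝ} {i : ℤ} (h : (L.length : ℤ) < i) : seqOf L i = ⊥ := by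
  rw [seqOf, if_neg (by omega), List.getElem?_eq_none (by omega)]
  rfl

lemma seqOf_eq_getElem {L : List ℝ} {i : ℤ} (h1 : 1 ≤ i) (h2 : (i - 1).toNat < L.length) :
    seqOf L i = (L[(i - 1).toNat] : EReal) := by
  rw [seqOf, if_neg (not_lt.2 h1), List.getElem?_eq_getElem h2]
  rfl

lemma seqOf_antitone {L : List ℝ} (hL : L.Pairwise (· ≥ ·)) : Antitone (seqOf L) := by
  intro i j hij
  rcases lt_or_ge i 1 with hi | hi
  · rw [seqOf_of_lt_one L hi]
    exact le_top
  rcases lt_or_ge (L.length : ℤ) j with hj | hj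
  · rw [seqOf_of_length_lt hj]
    exact bot_le
  rw [seqOf_eq_getElem hi (by omega), seqOf_eq_getElem (hi.trans hij) (by omega),
    EReal.coe_le_coe_iff]
  rcases (show (i - 1).toNat ≤ (j - 1).toNat by omega).eq_or_lt with heq | hlt
  · simp only [heq, le_refl]
  · exact List.pairwise_iff_getElem.1 hL _ _ _ _ hlt

lemma seqOf_ofFn {d : ℕ} (c : ℤ → ℝ) {i : ℤ} (h1 : 1 ≤ i) (h2 : i ≤ d) :
    seqOf (List.ofFn fun j : Fin d => c (j + 1)) i = c i := by
  rw [seqOf_eq_getElem h1 (by rw [List.length_ofFn]; omega), List.getElem_ofFn]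
  congr 2
  push_cast
  omega

lemma rSeq_of_lt_one (f : ℝ[X]) {i : ℤ} (h : i < 1) : rSeq f i = ⊤ := seqOf_of_lt_one _ h

lemma rSeq_ne_top (f : ℝ[X]) {i : ℤ} (h : 1 ≤ i) : rSeq f i ≠ ⊤ := by
  rw [rSeq, seqOf, if_neg (not_lt.2 h)]
  cases (f.roots.sort (· ≥ ·))[(i - 1).toNat]? with
  | none => exact bot_ne_top
  | some x => exact EReal.coe_ne_top x

lemma rSeq_antitone (f : ℝ[X]) : Antitone (rSeq f) :=
  seqOf_antitone (Multiset.pairwise_sort _ _)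

lemma rSeq_of_natDegree_lt {f : ℝ[X]} (hf : f.roots.card = f.natDegree) {i : ℤ}
    (h : (f.natDegree : ℤ) < i) : rSeq f i = ⊥ :=
  seqOf_of_length_lt (by rwa [Multiset.length_sort, hf])

lemma le_rSeq_of_forall_le {f : ℝ[X]} (hf : f.roots.card = f.natDegree) {B : ℝ}
    (hB : ∀ x ∈ f.roots, B ≤ x) {i : ℤ} (h : i ≤ f.natDegree) : (B : EReal) ≤ rSeq f i := by
  rcases lt_or_ge i 1 with hi | hi
  · rw [rSeq_of_lt_one f hi]
    exact le_top
  have hlen : (i - 1).toNat < (f.roots.sort (· ≥ ·)).length := by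
    rw [Multiset.length_sort, hf]
    omega
  rw [rSeq, seqOf_eq_getElem hi hlen, EReal.coe_le_coe_iff]
  exact hB _ ((Multiset.mem_sort _).1 (List.getElem_mem hlen))

lemma rSeq_multiset_prod_X_sub_C {L : List ℝ} (hL : L.Pairwise (· ≥ ·)) :
    rSeq ((L : Multiset ℝ).map (X - C ·)).prod = seqOf L := by
  unfold rSeq
  rw [roots_multiset_prod_X_sub_C, Multiset.coe_sort, List.mergeSort_eq_self _ hL]

lemma pqInt_iff {p q : ℕ} {f g : ℝ[X]} :
    PQInt p q f g ↔ ∀ j : ℤ, rSeq f (j + q) ≤ rSeq g j ∧ rSeq g j ≤ rSeq f (j - p) := by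
  constructor
  · intro h j
    exact ⟨by simpa using (h (j + q)).2, by simpa using (h (j - p)).1⟩
  · intro h i
    exact ⟨by simpa using (h (i + p)).2, by simpa using (h (i - q)).1⟩

theorem exists_monic_rSeq_between (ℓ u : ℤ → EReal) (d : ℕ) (B : ℝ) (hℓ : Antitone ℓ)
    (hℓu : ℓ ≤ u) (hu_top : ∀ j < 1, u j = ⊤) (hℓ_ne_top : ∀ j : ℤ, 1 ≤ j → ℓ j ≠ ⊤)
    (hℓ_bot : ∀ j, (d : ℤ) < j → ℓ j = ⊥) (hB : ∀ j : ℤ, 1 ≤ j → j ≤ d → (B : EReal) ≤ u j) :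
    ∃ h : ℝ[X], h.Monic ∧ h.roots.card = h.natDegree ∧ h.natDegree = d ∧
      ∀ j, ℓ j ≤ rSeq h j ∧ rSeq h j ≤ u j := by
  set c : ℤ → EReal := fun j => max (ℓ j) B
  have hc_ne_bot (j : ℤ) : c j ≠ ⊥ := ((EReal.bot_lt_coe B).trans_le (le_max_right _ _)).ne'
  have hc (j : ℤ) (hj : 1 ≤ j) : ((c j).toReal : EReal) = c j :=
    EReal.coe_toReal (max_ne_top (hℓ_ne_top j hj) (EReal.coe_ne_top B)) (hc_ne_bot j)
  set L := List.ofFn fun j : Fin d => (c (j + 1)).toReal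
  have hL : L.Pairwise (· ≥ ·) := List.pairwise_ofFn.2 fun i j hij =>
    EReal.toReal_le_toReal (max_le_max_right _ (hℓ (by simpa using hij.le))) (hc_ne_bot _)
      (max_ne_top (hℓ_ne_top _ (by omega)) (EReal.coe_ne_top B))
  refine ⟨((L : Multiset ℝ).map (X - C ·)).prod,
    monic_multiset_prod_of_monic _ _ fun a _ => monic_X_sub_C a, ?_, ?_, fun j => ?_⟩
  · rw [roots_multiset_prod_X_sub_C, natDegree_multiset_prod_X_sub_C_eq_card]
  · rw [natDegree_multiset_prod_X_sub_C_eq_card, Multiset.coe_card, List.length_ofFn]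
  rw [rSeq_multiset_prod_X_sub_C hL]
  rcases lt_or_ge j 1 with hj | hj
  · rw [seqOf_of_lt_one L hj, hu_top j hj]
    exact ⟨le_top, le_rfl⟩
  rcases lt_or_ge (d : ℤ) j with hjd | hjd
  · rw [seqOf_of_length_lt (by rwa [List.length_ofFn]), hℓ_bot j hjd]
    exact ⟨le_rfl, bot_le⟩
  rw [seqOf_ofFn (fun j => (c j).toReal) hj hjd, hc j hj]
  exact ⟨le_max_left _ _, max_le (hℓu j) (hB j hj hjd)⟩

lemma PQInt.max_rSeq_le_min_rSeq {p q s t : ℕ} {f g : ℝ[X]} (hfg : PQInt p q f g)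
    (hs : s ≤ p) (ht : t ≤ q) (j : ℤ) :
    max (rSeq f (j + t)) (rSeq g (j + (p - s : ℕ))) ≤
      min (rSeq f (j - s)) (rSeq g (j - (q - t : ℕ))) := by
  have hgf : rSeq g (j + (p - s : ℕ)) ≤ rSeq f (j - s) := by
    have := (hfg (j - s)).1
    rwa [show j - s + p = j + (p - s : ℕ) by omega] at this
  have hfg' : rSeq f (j + t) ≤ rSeq g (j - (q - t : ℕ)) := by
    have := (hfg (j + t)).2
    rwa [show j + t - q = j - (q - t : ℕ) by omega] at this
  refine max_le (le_min (rSeq_antitone f (by omega)) hfg') (le_min hgf (rSeq_antitone g ?_))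
  omega

theorem stmt4 (f g : Polynomial ℝ) (hf : RR f) (hg : RR g) (p q s t : ℕ)
    (hs : s ≤ p) (ht : t ≤ q) (hfg : PQInt p q f g) (d : ℕ)
    (hk : max ((f.natDegree : ℤ) - t) ((g.natDegree : ℤ) - p + s) ≤ (d : ℤ))
    (hm : (d : ℤ) ≤ min ((f.natDegree : ℤ) + s) ((g.natDegree : ℤ) + q - t)) :
    ∃ h : Polynomial ℝ, h.Monic ∧ h.roots.card = h.natDegree ∧ h.natDegree = d ∧
      PQInt s t f h ∧ PQInt (p - s) (q - t) h g := by
  obtain ⟨-, hfc⟩ := hf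
  obtain ⟨-, hgc⟩ := hg
  rw [max_le_iff] at hk
  rw [le_min_iff] at hm
  obtain ⟨B, hB⟩ := (f.roots + g.roots).toFinset.bddBelow
  have hBf : ∀ x ∈ f.roots, B ≤ x := fun x hx => hB (by simp [hx])
  have hBg : ∀ x ∈ g.roots, B ≤ x := fun x hx => hB (by simp [hx])
  obtain ⟨h, hmonic, hroots, hdeg, hbounds⟩ := exists_monic_rSeq_between
    (fun j => max (rSeq f (j + t)) (rSeq g (j + (p - s : ℕ))))
    (fun j => min (rSeq f (j - s)) (rSeq g (j - (q - t : ℕ)))) d B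
    (fun i j hij => max_le_max (rSeq_antitone f (by omega)) (rSeq_antitone g (by omega)))
    (hfg.max_rSeq_le_min_rSeq hs ht)
    (fun j hj => by simp only [rSeq_of_lt_one _ (by omega : j - s < 1),
      rSeq_of_lt_one _ (by omega : j - (q - t : ℕ) < 1), min_self])
    (fun j hj => max_ne_top (rSeq_ne_top f (by omega)) (rSeq_ne_top g (by omega)))
    (fun j hj => by rw [rSeq_of_natDegree_lt hfc (by omega), rSeq_of_natDegree_lt hgc (by omega),
      max_self])
    (fun j hj hjd => le_min (le_rSeq_of_forall_le hfc hBf (by omega))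
      (le_rSeq_of_forall_le hgc hBg (by omega)))
  refine ⟨h, hmonic, hroots, hdeg, pqInt_iff.2 fun j => ?_, fun j => ?_⟩
  · exact ⟨(le_max_left _ _).trans (hbounds j).1, (hbounds j).2.trans (min_le_left _ _)⟩
  · exact ⟨(le_max_right _ _).trans (hbounds j).1, (hbounds j).2.trans (min_le_right _ _)⟩
end

section
/- If f (p,q)-interlaces g with p, q ≥ 1, then there exists a monic real-rooted polynomial h of the same degree as f such that both f (p,0)-interlaces h and g (q,0)-interlaces h. -/
/-!
Take `h` with root sequence `r_i(h) = max (r_i(f), r_i(g))`: the pointwise maximum of two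
non-increasing sequences of the same length is again one, so it is the root sequence of a monic
real-rooted polynomial of degree `n`. The bounds `r_i(f), r_i(g) ≤ r_i(h)` are immediate. For the
other side, `r_{i+p}(h) ≤ r_i(f)` because `r_{i+p}(f) ≤ r_i(f)` and `r_{i+p}(g) ≤ r_i(f)`, and
`r_{i+q}(h) ≤ r_i(g)` because `r_{i+q}(f) ≤ r_i(g)` and `r_{i+q}(g) ≤ r_i(g)`.
-/

open Polynomial

lemma seqOf_zipWith_max {L M : List ℝ} (hLM : L.length = M.length) (i : ℤ) :
    seqOf (List.zipWith max L M) i = max (seqOf L i) (seqOf M i) := by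
  unfold seqOf
  split_ifs
  · simp
  · rw [List.getElem?_zipWith]
    rcases lt_or_ge (i - 1).toNat L.length with hk | hk
    · rw [List.getElem?_eq_getElem hk, List.getElem?_eq_getElem (hLM ▸ hk)]
      exact EReal.coe_strictMono.monotone.map_max
    · rw [List.getElem?_eq_none hk, List.getElem?_eq_none (hLM ▸ hk)]
      simp

lemma List.Pairwise.zipWith_max {L M : List ℝ} (hL : L.Pairwise (· ≥ ·))
    (hM : M.Pairwise (· ≥ ·)) : (List.zipWith max L M).Pairwise (· ≥ ·) := by
  rw [List.pairwise_iff_getElem]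
  intro a b ha hb hab
  simp only [List.length_zipWith, lt_inf_iff] at ha hb
  simp only [List.getElem_zipWith]
  exact max_le_max (List.pairwise_iff_getElem.mp hL a b ha.1 hb.1 hab)
    (List.pairwise_iff_getElem.mp hM a b ha.2 hb.2 hab)

lemma exists_monic_rSeq_eq_max {f g : ℝ[X]} (hfg : f.roots.card = g.roots.card) :
    ∃ h : ℝ[X], h.Monic ∧ h.roots.card = h.natDegree ∧ h.natDegree = f.roots.card ∧
      rSeq h = fun i => max (rSeq f i) (rSeq g i) := by
  set L := List.zipWith max (f.roots.sort (· ≥ ·)) (g.roots.sort (· ≥ ·))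
  have hlen : (f.roots.sort (· ≥ ·)).length = (g.roots.sort (· ≥ ·)).length := by
    simpa only [Multiset.length_sort] using hfg
  have hL : L.length = f.roots.card := by simp [L, hfg]
  refine ⟨((L : Multiset ℝ).map (X - C ·)).prod,
    monic_multiset_prod_of_monic _ _ fun a _ => monic_X_sub_C a, ?_, ?_, ?_⟩
  · rw [roots_multiset_prod_X_sub_C, natDegree_multiset_prod_X_sub_C_eq_card]
  · rw [natDegree_multiset_prod_X_sub_C_eq_card, Multiset.coe_card, hL]
  · rw [rSeq_multiset_prod_X_sub_C
      ((f.roots.pairwise_sort _).zipWith_max (g.roots.pairwise_sort _))]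
    exact funext (seqOf_zipWith_max hlen)

lemma pqInt_zero_left_of_rSeq_eq_max {p : ℕ} {f g h : ℝ[X]}
    (hfg : ∀ i : ℤ, rSeq g (i + p) ≤ rSeq f i)
    (hh : rSeq h = fun i => max (rSeq f i) (rSeq g i)) :
    PQInt p 0 f h := fun i => by
  simp only [hh, Nat.cast_zero, sub_zero]
  exact ⟨max_le (rSeq_antitone f (by omega)) (hfg i), le_max_left _ _⟩

lemma pqInt_zero_right_of_rSeq_eq_max {q : ℕ} {f g h : ℝ[X]}
    (hfg : ∀ i : ℤ, rSeq f i ≤ rSeq g (i - q))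
    (hh : rSeq h = fun i => max (rSeq f i) (rSeq g i)) :
    PQInt q 0 g h := fun i => by
  simp only [hh, Nat.cast_zero, sub_zero]
  exact ⟨max_le (by simpa using hfg (i + q)) (rSeq_antitone g (by omega)), le_max_right _ _⟩

theorem stmt17_general (f g : Polynomial ℝ)
    (hf : f.roots.card = f.natDegree) (hg : g.roots.card = g.natDegree)
    (hdeg : f.natDegree = g.natDegree) (p q : ℕ)
    (hint : PQInt p q f g) :
    ∃ h : Polynomial ℝ, h.Monic ∧ h.roots.card = h.natDegree ∧
      h.natDegree = f.natDegree ∧ PQInt p 0 f h ∧ PQInt q 0 g h := by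
  obtain ⟨h, h_monic, h_roots, h_deg, h_max⟩ :=
    exists_monic_rSeq_eq_max (f := f) (g := g) (by rw [hf, hg, hdeg])
  exact ⟨h, h_monic, h_roots, h_deg.trans hf,
    pqInt_zero_left_of_rSeq_eq_max (fun i => (hint i).1) h_max,
    pqInt_zero_right_of_rSeq_eq_max (fun i => (hint i).2) h_max⟩

theorem stmt17 (f g : Polynomial ℝ) (hfm : f.Monic) (hgm : g.Monic)
    (hf : f.roots.card = f.natDegree) (hg : g.roots.card = g.natDegree)
    (hdeg : f.natDegree = g.natDegree) (p q : ℕ) (hp : 1 ≤ p) (hq : 1 ≤ q)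
    (hint : PQInt p q f g) :
    ∃ h : Polynomial ℝ, h.Monic ∧ h.roots.card = h.natDegree ∧
      h.natDegree = f.natDegree ∧ PQInt p 0 f h ∧ PQInt q 0 g h :=
  stmt17_general f g hf hg hdeg p q hint
end
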